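/- arXiv:1610.09107 — 5 statements merged into one kernel-verified Lean document; each statement's English description precedes it below -/
import Mathlib

section
/- Let K be a field of characteristic zero equipped with a multiplicative ultrametric norm for which K is complete, let p be a prime number with ‖(p : K)‖ < 1, and let q = p^o for some integer o ≥ 1. Let δ ≥ 1 and M ≥ 0 be integers, and let (c_{n,m})_{n ∈ ℕ, 0 ≤ m ≤ M} be a family of elements of K such that ∑_{n ∈ ℕ} ∑_{m=0}^{M} ‖c_{n,m}‖ · ‖(q : K)‖^n < ∞. If for every natural number a ≥ δ the (convergent) sum ∑_{n ∈ ℕ} ∑_{m=0}^{M} c_{n,m} · (q : K)^{a n} · (a : K)^m equals 0, then c_{n,m} = 0 for all n ∈ ℕ and all 0 ≤ m ≤ M. -/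
/-!
Write `P_n(a) = ∑_m c_{n,m} a^m`. If `P_n = 0` for `n < N`, dividing the vanishing sum by
`q^{aN}` shows that `P_N(a)` equals minus a tail `∑_{n > N} q^{a(n-N)} P_n(a)`; since the
values of a polynomial at natural numbers are bounded by its coefficients in an ultrametric
field, dominated convergence makes this tail tend to `0` as `a → ∞`. Finally, a polynomial
whose values at the natural numbers tend to `0` is zero in characteristic zero: its
`deg P`-th forward difference is the constant `(deg P)! · lc(P)`, but it is also a fixed
combination of shifted values, so it tends to `0`.
-/

open Filter Topology Finset Polynomial

theorem Polynomial.eq_zero_of_tendsto_eval_natCast {R : Type*} [CommRing R] [IsDomain R]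
    [CharZero R] [TopologicalSpace R] [IsTopologicalRing R] [T2Space R] {P : R[X]}
    (h : Tendsto (fun a : ℕ => P.eval (a : R)) atTop (𝓝 0)) : P = 0 := by
  have hshift (k : ℕ) : Tendsto (fun a : ℕ => P.eval ((a : R) + k • 1)) atTop (𝓝 0) := by
    simpa [Function.comp_def] using h.comp (tendsto_add_atTop_nat k)
  have hdiff :
      Tendsto (fun a : ℕ => ((fwdDiff 1)^[P.natDegree] P.eval) (a : R)) atTop (𝓝 0) := by
    simp_rw [fwdDiff_iter_eq_sum_shift]
    simpa using tendsto_finsetSum _ fun k _ =>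
      (hshift k).const_smul ((-1 : ℤ) ^ (P.natDegree - k) * (P.natDegree.choose k : ℤ))
  simp only [P.fwdDiff_iter_degree_eq_factorial, Pi.smul_apply, Pi.natCast_apply, smul_eq_mul,
    tendsto_const_nhds_iff] at hdiff
  simpa [Nat.factorial_ne_zero] using hdiff

theorem norm_sum_mul_natCast_pow_le {K : Type*} [NormedField K] [IsUltrametricDist K]
    (s : Finset ℕ) (b : ℕ → K) (a : ℕ) :
    ‖∑ m ∈ s, b m * (a : K) ^ m‖ ≤ ∑ m ∈ s, ‖b m‖ := by
  refine (norm_sum_le _ _).trans (sum_le_sum fun m _ => ?_)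
  rw [norm_mul, norm_pow]
  exact mul_le_of_le_one_right (norm_nonneg _)
    (pow_le_one₀ (norm_nonneg _) (IsUltrametricDist.norm_natCast_le_one K a))

section TsumPowMul

variable {K : Type*} [NormedField K] [CompleteSpace K] {x : K} {u : ℕ → ℕ → K}
  {B : ℕ → ℝ}

theorem tendsto_zero_of_tsum_pow_mul_eq_zero (hx : ‖x‖ < 1)
    (hB : Summable fun n => B n * ‖x‖ ^ n) (hu : ∀ n a, ‖u n a‖ ≤ B n)
    (h : ∀ᶠ a in atTop, ∑' n, x ^ (a * n) * u n a = 0) :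
    Tendsto (u 0) atTop (𝓝 0) := by
  have hpow {a k : ℕ} (hak : a ≤ k) : ‖x‖ ^ k ≤ ‖x‖ ^ a :=
    pow_le_pow_of_le_one (norm_nonneg _) hx.le hak
  have hterm (n a : ℕ) : ‖x ^ (a * n) * u n a‖ ≤ ‖x‖ ^ (a * n) * B n := by
    rw [norm_mul, norm_pow]
    exact mul_le_mul_of_nonneg_left (hu n a) (by positivity)
  have hdom (n a : ℕ) (ha : 1 ≤ a) : ‖x ^ (a * n) * u n a‖ ≤ B n * ‖x‖ ^ n := by
    rw [mul_comm (B n)]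
    exact (hterm n a).trans (mul_le_mul_of_nonneg_right (hpow (Nat.le_mul_of_pos_left n ha))
      ((norm_nonneg _).trans (hu n 0)))
  have htail : Tendsto (fun a => ∑' n, x ^ (a * (n + 1)) * u (n + 1) a) atTop (𝓝 0) := by
    have hlim (n : ℕ) : Tendsto (fun a => x ^ (a * (n + 1)) * u (n + 1) a) atTop (𝓝 0) := by
      refine squeeze_zero_norm (fun a => (hterm _ a).trans ?_) (by simpa using
        (tendsto_pow_atTop_nhds_zero_of_lt_one (norm_nonneg _) hx).mul_const (B (n + 1)))
      exact mul_le_mul_of_nonneg_right (hpow (Nat.le_mul_of_pos_right a n.succ_pos))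
        ((norm_nonneg _).trans (hu _ 0))
    simpa using tendsto_tsum_of_dominated_convergence ((summable_nat_add_iff 1).2 hB) hlim
      (eventually_atTop.2 ⟨1, fun a ha n => hdom (n + 1) a ha⟩)
  have hsummable (a : ℕ) (ha : 1 ≤ a) : Summable fun n => x ^ (a * n) * u n a :=
    hB.of_norm_bounded fun n => hdom n a ha
  have heq : (fun a => -∑' n, x ^ (a * (n + 1)) * u (n + 1) a) =ᶠ[atTop] u 0 := by
    filter_upwards [h, eventually_ge_atTop 1] with a hzero ha
    rw [(hsummable a ha).tsum_eq_zero_add, mul_zero, pow_zero, one_mul] at hzero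
    exact neg_eq_of_add_eq_zero_left hzero
  simpa using htail.neg.congr' heq

theorem tendsto_zero_of_tsum_pow_mul_eq_zero_of_lt (hx0 : x ≠ 0) (hx : ‖x‖ < 1)
    (hB : Summable fun n => B n * ‖x‖ ^ n) (hu : ∀ n a, ‖u n a‖ ≤ B n) {N : ℕ}
    (hlow : ∀ n < N, ∀ a, u n a = 0) (h : ∀ᶠ a in atTop, ∑' n, x ^ (a * n) * u n a = 0) :
    Tendsto (u N) atTop (𝓝 0) := by
  have hshift (a : ℕ) :
      ∑' n, x ^ (a * n) * u n a = x ^ (a * N) * ∑' n, x ^ (a * n) * u (n + N) a := by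
    rw [← (add_left_injective N).tsum_eq, ← tsum_mul_left]
    · exact tsum_congr fun n => by rw [mul_add, pow_add]; ring
    · intro n hn
      have : N ≤ n := not_lt.1 fun hlt => hn (by simp [hlow n hlt])
      exact ⟨n - N, Nat.sub_add_cancel this⟩
  have hB' : Summable fun n => B (n + N) * ‖x‖ ^ n := by
    refine ((summable_nat_add_iff N).2 hB |>.mul_left (‖x‖ ^ N)⁻¹).congr fun n => ?_
    have : ‖x‖ ^ N ≠ 0 := by positivity
    field_simp
    ring
  have h' : ∀ᶠ a in atTop, ∑' n, x ^ (a * n) * u (n + N) a = 0 := by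
    filter_upwards [h] with a ha
    rw [hshift] at ha
    exact (mul_eq_zero.1 ha).resolve_left (pow_ne_zero _ hx0)
  simpa using tendsto_zero_of_tsum_pow_mul_eq_zero (u := fun n a => u (n + N) a) hx hB'
    (fun n a => hu _ a) h'

end TsumPowMul

theorem stmt_0_general {K : Type*} [NormedField K] [CharZero K] [IsUltrametricDist K]
    [CompleteSpace K] (p : ℕ) (hp : p.Prime) (hpK : ‖(p : K)‖ < 1)
    (o : ℕ) (ho : 1 ≤ o) (q : ℕ) (hq : q = p ^ o)
    (δ M : ℕ) (c : ℕ → ℕ → K)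
    (hsum : Summable fun n : ℕ => ∑ m ∈ Finset.range (M + 1), ‖c n m‖ * ‖(q : K)‖ ^ n)
    (hzero : ∀ a : ℕ, δ ≤ a →
      (∑' n : ℕ, ∑ m ∈ Finset.range (M + 1),
        c n m * (q : K) ^ (a * n) * (a : K) ^ m) = 0) :
    ∀ n : ℕ, ∀ m ≤ M, c n m = 0 := by
  set P : ℕ → K[X] := fun n => ∑ m ∈ range (M + 1), C (c n m) * X ^ m
  have heval (n : ℕ) (y : K) : (P n).eval y = ∑ m ∈ range (M + 1), c n m * y ^ m := by
    simp [P, eval_finsetSum]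
  have hcoeff (n m : ℕ) (hm : m ≤ M) : (P n).coeff m = c n m := by
    simp [P, finsetSum_coeff, Nat.lt_succ_iff.2 hm]
  have hq0 : (q : K) ≠ 0 := by simp [hq, hp.ne_zero]
  have hq1 : ‖(q : K)‖ < 1 := by
    rw [hq, Nat.cast_pow, norm_pow]
    exact pow_lt_one₀ (norm_nonneg _) hpK (by omega)
  have hbound (n a : ℕ) : ‖(P n).eval (a : K)‖ ≤ ∑ m ∈ range (M + 1), ‖c n m‖ := by
    simpa [heval] using norm_sum_mul_natCast_pow_le _ (c n) a
  have hvanish : ∀ᶠ a : ℕ in atTop, ∑' n, (q : K) ^ (a * n) * (P n).eval (a : K) = 0 := by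
    filter_upwards [eventually_ge_atTop δ] with a ha
    rw [← hzero a ha]
    simp only [heval, mul_sum]
    exact tsum_congr fun n => sum_congr rfl fun m _ => by ring
  intro N
  induction N using Nat.strong_induction_on with
  | _ N ih =>
  suffices P N = 0 from fun m hm => by rw [← hcoeff N m hm, this, coeff_zero]
  have hlow : ∀ n < N, ∀ a : ℕ, (P n).eval (a : K) = 0 := fun n hn a => by
    rw [heval]
    exact sum_eq_zero fun m hm => by rw [ih n hn m (Nat.lt_succ_iff.1 (mem_range.1 hm)), zero_mul]
  exact eq_zero_of_tendsto_eval_natCast <| tendsto_zero_of_tsum_pow_mul_eq_zero_of_lt hq0 hq1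
    (by simpa [sum_mul] using hsum) hbound hlow hvanish

/-- **Uniqueness of coefficients** (Proposition 4.1 of the paper): if a function
`a ↦ ∑_{n,m} c_{n,m} (q^a)^n a^m` (with `q = p^o`, `‖p‖ < 1`, coefficients summable)
vanishes for all natural numbers `a ≥ δ`, then all coefficients `c_{n,m}` vanish. -/
theorem stmt_0 {K : Type*} [NormedField K] [CharZero K] [IsUltrametricDist K]
    [CompleteSpace K] (p : ℕ) (hp : p.Prime) (hpK : ‖(p : K)‖ < 1)
    (o : ℕ) (ho : 1 ≤ o) (q : ℕ) (hq : q = p ^ o)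
    (δ M : ℕ) (hδ : 1 ≤ δ) (c : ℕ → ℕ → K)
    (hsum : Summable fun n : ℕ => ∑ m ∈ Finset.range (M + 1), ‖c n m‖ * ‖(q : K)‖ ^ n)
    (hzero : ∀ a : ℕ, δ ≤ a →
      (∑' n : ℕ, ∑ m ∈ Finset.range (M + 1),
        c n m * (q : K) ^ (a * n) * (a : K) ^ m) = 0) :
    ∀ n : ℕ, ∀ m ≤ M, c n m = 0 :=
  stmt_0_general p hp hpK o ho q hq δ M c hsum hzero
end

section
/- Let K be a field equipped with a multiplicative ultrametric norm for which K is complete, let p be a prime number with ‖(p : K)‖ < 1, and let q = p^o for some integer o ≥ 1. Let M ≥ 0 be an integer and let (c_{n,m})_{n ∈ ℕ, 0 ≤ m ≤ M} be a family of elements of K with ∑_{n ∈ ℕ} ∑_{m=0}^{M} ‖c_{n,m}‖ · ‖(q : K)‖^n < ∞. Then for every fixed natural number a₀, the sequence u ↦ ∑_{n ∈ ℕ} ∑_{m=0}^{M} c_{n,m} · (q : K)^{(a₀ + p^u) n} · ((a₀ + p^u : ℕ) : K)^m converges in K, as u → ∞, to ∑_{m=0}^{M} c_{0,m} · (a₀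 : K)^m. -/
/-!
Write `a = a₀ + p^u`. The `n`-th term of the series is `q^(a n) · Pₙ(a)` with
`Pₙ(X) = ∑_m c_{n,m} X^m`. Since `‖p‖ < 1`, the elements `a` tend to `a₀` in `K` and stay
bounded, while `a → ∞` in `ℕ`; as `‖q‖ < 1`, every term with `n ≥ 1` tends to `0` and all terms
are dominated by `‖q‖^n ∑_m ‖c_{n,m}‖` up to a constant. Tannery's theorem leaves only
`P₀(a₀)`.
-/

open Filter Topology Finset

section
variable {K : Type*} [NormedField K]

lemma norm_sum_range_mul_pow_le (M : ℕ) (c : ℕ → K) {b : K} {B : ℝ} (hb : ‖b‖ ≤ B)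
    (hB : 1 ≤ B) :
    ‖∑ m ∈ range (M + 1), c m * b ^ m‖ ≤ (∑ m ∈ range (M + 1), ‖c m‖) * B ^ M := by
  rw [sum_mul]
  refine (norm_sum_le _ _).trans (sum_le_sum fun m hm => ?_)
  rw [norm_mul, norm_pow]
  have hbm : ‖b‖ ^ m ≤ B ^ M :=
    (pow_le_pow_left₀ (norm_nonneg b) hb m).trans
      (pow_le_pow_right₀ hB (Nat.lt_succ_iff.mp (mem_range.mp hm)))
  exact mul_le_mul_of_nonneg_left hbm (norm_nonneg _)

theorem tendsto_tsum_pow_mul_of_tendsto_atTop [CompleteSpace K] {α : Type*} {l : Filter α}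
    {x : K} (hx : ‖x‖ < 1) {a : α → ℕ} (ha : Tendsto a l atTop)
    {f : α → ℕ → K} {C : ℕ → ℝ} (hC : Summable fun n => C n * ‖x‖ ^ n)
    (hbound : ∀ᶠ u in l, ∀ n, ‖f u n‖ ≤ C n) {L : K} (hf : Tendsto (f · 0) l (𝓝 L)) :
    Tendsto (fun u => ∑' n, x ^ (a u * n) * f u n) l (𝓝 L) := by
  have hlim : ∀ n, Tendsto (fun u => x ^ (a u * n) * f u n) l (𝓝 (if n = 0 then L else 0)) := by
    intro n
    rcases eq_or_ne n 0 with rfl | hn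
    · simpa using hf
    rw [if_neg hn]
    have han : Tendsto (fun u => a u * n) l atTop :=
      tendsto_atTop_mono (fun u => Nat.le_mul_of_pos_right _ (Nat.pos_of_ne_zero hn)) ha
    have hpow : Tendsto (fun u => ‖x‖ ^ (a u * n) * C n) l (𝓝 0) := by
      simpa using ((tendsto_pow_atTop_nhds_zero_of_lt_one (norm_nonneg x) hx).comp han).mul_const
        (C n)
    refine squeeze_zero_norm' ?_ hpow
    filter_upwards [hbound] with u hu
    rw [norm_mul, norm_pow]
    exact mul_le_mul_of_nonneg_left (hu n) (by positivity)
  have hdom : ∀ᶠ u in l, ∀ n, ‖x ^ (a u * n) * f u n‖ ≤ C n * ‖x‖ ^ n := by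
    filter_upwards [hbound, ha.eventually_ge_atTop 1] with u hu hau n
    rw [norm_mul, norm_pow, mul_comm (C n)]
    have hxn : ‖x‖ ^ (a u * n) ≤ ‖x‖ ^ n :=
      pow_le_pow_of_le_one (norm_nonneg x) hx.le (Nat.le_mul_of_pos_left n hau)
    exact mul_le_mul hxn (hu n) (norm_nonneg _) (by positivity)
  simpa using tendsto_tsum_of_dominated_convergence hC hlim hdom

end

theorem stmt_1_general {K : Type*} [NormedField K] [CompleteSpace K]
    (p : ℕ) (hp : p.Prime) (hpK : ‖(p : K)‖ < 1)
    (o : ℕ) (ho : 1 ≤ o) (q : ℕ) (hq : q = p ^ o)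
    (M : ℕ) (c : ℕ → ℕ → K)
    (hsum : Summable fun n : ℕ => ∑ m ∈ Finset.range (M + 1), ‖c n m‖ * ‖(q : K)‖ ^ n)
    (a₀ : ℕ) :
    Filter.Tendsto
      (fun u : ℕ => ∑' n : ℕ, ∑ m ∈ Finset.range (M + 1),
        c n m * (q : K) ^ ((a₀ + p ^ u) * n) * ((a₀ + p ^ u : ℕ) : K) ^ m)
      Filter.atTop
      (nhds (∑ m ∈ Finset.range (M + 1), c 0 m * (a₀ : K) ^ m)) := by
  have hqK : ‖(q : K)‖ < 1 := by
    rw [hq, Nat.cast_pow, norm_pow]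
    exact pow_lt_one₀ (norm_nonneg _) hpK (by omega)
  have hpow : Tendsto (fun u => (p : K) ^ u) atTop (𝓝 0) :=
    tendsto_pow_atTop_nhds_zero_of_norm_lt_one hpK
  have ha : Tendsto (fun u => a₀ + p ^ u) atTop atTop :=
    tendsto_atTop_mono (fun u => Nat.le_add_left _ _) (tendsto_pow_atTop_atTop_of_one_lt hp.one_lt)
  have hb : Tendsto (fun u => ((a₀ + p ^ u : ℕ) : K)) atTop (𝓝 a₀) := by
    simpa using hpow.const_add (a₀ : K)
  have hbB : ∀ u, ‖((a₀ + p ^ u : ℕ) : K)‖ ≤ ‖(a₀ : K)‖ + 1 := fun u => by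
    rw [Nat.cast_add, Nat.cast_pow]
    refine (norm_add_le _ _).trans ?_
    rw [norm_pow]
    gcongr
    exact pow_le_one₀ (norm_nonneg _) hpK.le
  have hC : Summable fun n =>
      (∑ m ∈ range (M + 1), ‖c n m‖) * (‖(a₀ : K)‖ + 1) ^ M * ‖(q : K)‖ ^ n :=
    (hsum.mul_right ((‖(a₀ : K)‖ + 1) ^ M)).congr fun n => by rw [← sum_mul]; ring
  have hlim := tendsto_tsum_pow_mul_of_tendsto_atTop hqK ha hC
    (Eventually.of_forall fun u n =>
      norm_sum_range_mul_pow_le M (c n) (hbB u) (le_add_of_nonneg_left (norm_nonneg _)))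
    (tendsto_finsetSum _ fun m _ => (hb.pow m).const_mul (c 0 m))
  refine hlim.congr fun u => tsum_congr fun n => ?_
  rw [mul_sum]
  exact sum_congr rfl fun m _ => by ring

/-- Extracting the constant term: taking `a = a₀ + p^u` and letting `u → ∞`, the value of
the series `∑_{n,m} c_{n,m} (q^a)^n a^m` converges to `∑_m c_{0,m} a₀^m`. -/
theorem stmt_1 {K : Type*} [NormedField K] [IsUltrametricDist K] [CompleteSpace K]
    (p : ℕ) (hp : p.Prime) (hpK : ‖(p : K)‖ < 1)
    (o : ℕ) (ho : 1 ≤ o) (q : ℕ) (hq : q = p ^ o)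
    (M : ℕ) (c : ℕ → ℕ → K)
    (hsum : Summable fun n : ℕ => ∑ m ∈ Finset.range (M + 1), ‖c n m‖ * ‖(q : K)‖ ^ n)
    (a₀ : ℕ) :
    Filter.Tendsto
      (fun u : ℕ => ∑' n : ℕ, ∑ m ∈ Finset.range (M + 1),
        c n m * (q : K) ^ ((a₀ + p ^ u) * n) * ((a₀ + p ^ u : ℕ) : K) ^ m)
      Filter.atTop
      (nhds (∑ m ∈ Finset.range (M + 1), c 0 m * (a₀ : K) ^ m)) :=
  stmt_1_general p hp hpK o ho q hq M c hsum a₀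
end

section
/- Let K be a field and let λ ∈ K be a nonzero element that is not a root of unity (i.e. λ^c ≠ 1 for every integer c ≥ 1). Let δ ≥ 1 and L ≥ 0 be integers, let C_1, …, C_δ be positive integers, and let P_1, …, P_δ be polynomials with coefficients in K. Then there exists a polynomial Q in two variables with coefficients in K such that for every natural number a with a ≥ L one has ∑_{L ≤ I_1 < I_2 < ⋯ < I_δ ≤ a−1} ∏_{j=1}^{δ} P_j((I_j : K)) · λ^{C_j I_j} = Q((a : K), λ^a), where the sum ranges over all strictly increasing δ-tuples of integers I_1, …, I_δ lying between L and a−1 (the sum being 0 when there are no such tuples). -/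
/-! Call `f : ℕ → K` an exponential polynomial from `L` if `f a = Q(a, λ^a)` for all `a ≥ L`.
These functions are closed under sums and products, and under `f ↦ (a ↦ ∑_{L ≤ b < a} f b λ^{cb})`
for `c ≥ 1`. By linearity it suffices to sum `p(b) μ^b` with `μ = λ^m`, `m ≥ 1`; as `μ ≠ 1`, the
difference equation `μ q(x + 1) - q(x) = p(x)` has a polynomial solution `q` (the left side is an
injective, hence bijective, operator on polynomials of degree `< n`), and the sum telescopes to
`μ^a q(a) - μ^L q(L)`. Splitting increasing tuples by their last entry, the `δ`-fold sum arises
from the constant `1` by `δ` such summation steps. -/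

open Polynomial Finset

namespace Polynomial

variable {K : Type*} [Field K]

theorem exists_smul_taylor_one_sub_eq {μ : K} (hμ : μ ≠ 1) (p : K[X]) :
    ∃ q : K[X], μ • taylor 1 q - q = p := by
  set D : K[X] →ₗ[K] K[X] := μ • taylor 1 - LinearMap.id
  have hD : Function.Injective D := by
    refine (injective_iff_map_eq_zero D).2 fun q hq => ?_
    have hfix : μ • taylor 1 q = q := sub_eq_zero.1 hq
    have hcoeff := congrArg (coeff · q.natDegree) hfix
    simp only [coeff_smul, smul_eq_mul] at hcoeff
    rw [← natDegree_taylor q 1, coeff_natDegree, leadingCoeff_taylor, natDegree_taylor,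
      coeff_natDegree] at hcoeff
    have : (μ - 1) * q.leadingCoeff = 0 := by linear_combination hcoeff
    exact leadingCoeff_eq_zero.1 ((mul_eq_zero.1 this).resolve_left (sub_ne_zero.2 hμ))
  have hmaps : ∀ q ∈ degreeLT K (p.natDegree + 1), D q ∈ degreeLT K (p.natDegree + 1) := by
    intro q hq
    rw [mem_degreeLT] at hq ⊢
    refine (degree_sub_le _ _).trans_lt (max_lt ?_ hq)
    exact (degree_smul_le _ _).trans_lt (by rwa [degree_taylor])
  obtain ⟨q, hq⟩ := LinearMap.injective_iff_surjective.1
    (fun x y h => Subtype.ext (hD (congrArg Subtype.val h)) :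
      Function.Injective (D.restrict hmaps))
    ⟨p, mem_degreeLT.2 (degree_le_natDegree.trans_lt
      (WithBot.coe_lt_coe.2 p.natDegree.lt_succ_self))⟩
  exact ⟨q, congrArg Subtype.val hq⟩

theorem exists_sum_Ico_eval_mul_pow {μ : K} (hμ : μ ≠ 1) (p : K[X]) :
    ∃ q : K[X], ∀ m n : ℕ, m ≤ n →
      ∑ b ∈ Ico m n, p.eval (b : K) * μ ^ b = μ ^ n * q.eval (n : K) - μ ^ m * q.eval (m : K) := by
  obtain ⟨q, hq⟩ := exists_smul_taylor_one_sub_eq hμ p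
  refine ⟨q, fun m n hmn => ?_⟩
  rw [← sum_Ico_sub (fun b => μ ^ b * q.eval (b : K)) hmn]
  refine sum_congr rfl fun b _ => ?_
  rw [← hq]
  simp only [eval_sub, eval_smul, taylor_eval, smul_eq_mul, Nat.cast_succ]
  ring

end Polynomial

section IsExpPolyFrom

variable {K : Type*} [Field K] (l : K) (L : ℕ)

def IsExpPolyFrom (f : ℕ → K) : Prop :=
  ∃ Q : MvPolynomial (Fin 2) K, ∀ a, L ≤ a → f a = MvPolynomial.eval ![(a : K), l ^ a] Q

variable {l L}

theorem IsExpPolyFrom.congr {f g : ℕ → K} (hf : IsExpPolyFrom l L f)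
    (hfg : ∀ a, L ≤ a → f a = g a) : IsExpPolyFrom l L g := by
  obtain ⟨Q, hQ⟩ := hf
  exact ⟨Q, fun a ha => (hfg a ha).symm.trans (hQ a ha)⟩

theorem IsExpPolyFrom.add {f g : ℕ → K} (hf : IsExpPolyFrom l L f) (hg : IsExpPolyFrom l L g) :
    IsExpPolyFrom l L (f + g) := by
  obtain ⟨Q, hQ⟩ := hf
  obtain ⟨R, hR⟩ := hg
  exact ⟨Q + R, fun a ha => by simp [hQ a ha, hR a ha]⟩

theorem IsExpPolyFrom.sub {f g : ℕ → K} (hf : IsExpPolyFrom l L f) (hg : IsExpPolyFrom l L g) :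
    IsExpPolyFrom l L (f - g) := by
  obtain ⟨Q, hQ⟩ := hf
  obtain ⟨R, hR⟩ := hg
  exact ⟨Q - R, fun a ha => by simp [hQ a ha, hR a ha]⟩

theorem IsExpPolyFrom.mul {f g : ℕ → K} (hf : IsExpPolyFrom l L f) (hg : IsExpPolyFrom l L g) :
    IsExpPolyFrom l L (f * g) := by
  obtain ⟨Q, hQ⟩ := hf
  obtain ⟨R, hR⟩ := hg
  exact ⟨Q * R, fun a ha => by simp [hQ a ha, hR a ha]⟩

theorem isExpPolyFrom_const (r : K) : IsExpPolyFrom l L fun _ => r :=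
  ⟨MvPolynomial.C r, fun a _ => by simp⟩

theorem isExpPolyFrom_eval (p : K[X]) : IsExpPolyFrom l L fun a => p.eval (a : K) :=
  ⟨Polynomial.aeval (MvPolynomial.X 0) p, fun a _ => by
    change _ = MvPolynomial.aeval ![(a : K), l ^ a] (Polynomial.aeval (MvPolynomial.X 0) p)
    rw [← Polynomial.aeval_algHom_apply]
    simp⟩

theorem isExpPolyFrom_pow_mul (c : ℕ) : IsExpPolyFrom l L fun a => l ^ (c * a) :=
  ⟨MvPolynomial.X 1 ^ c, fun a _ => by simp [mul_comm c, pow_mul]⟩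

theorem isExpPolyFrom_sum_Ico_eval_mul_pow {c : ℕ} (hc : l ^ c ≠ 1) (p : K[X]) :
    IsExpPolyFrom l L fun a => ∑ b ∈ Ico L a, p.eval (b : K) * l ^ (c * b) := by
  obtain ⟨q, hq⟩ := exists_sum_Ico_eval_mul_pow hc p
  refine (((isExpPolyFrom_pow_mul c).mul (isExpPolyFrom_eval q)).sub
    (isExpPolyFrom_const (l ^ (c * L) * q.eval (L : K)))).congr fun a ha => ?_
  simp only [pow_mul, hq L a ha, Pi.sub_apply, Pi.mul_apply]

theorem IsExpPolyFrom.sum_Ico_mul_pow (hl : ∀ c : ℕ, 1 ≤ c → l ^ c ≠ 1) {f : ℕ → K}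
    (hf : IsExpPolyFrom l L f) {c : ℕ} (hc : 1 ≤ c) :
    IsExpPolyFrom l L fun a => ∑ b ∈ Ico L a, f b * l ^ (c * b) := by
  obtain ⟨Q, hQ⟩ := hf
  have hsum : ∀ a, ∑ b ∈ Ico L a, f b * l ^ (c * b) =
      ∑ b ∈ Ico L a, MvPolynomial.eval ![(b : K), l ^ b] Q * l ^ (c * b) := fun a =>
    sum_congr rfl fun b hb => by rw [hQ b (mem_Ico.1 hb).1]
  simp only [hsum]
  clear hsum hQ
  induction Q using MvPolynomial.induction_on' with
  | monomial s r =>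
    refine (isExpPolyFrom_sum_Ico_eval_mul_pow (hl (s 1 + c) (by omega)) (C r * X ^ s 0)).congr
      fun a _ => sum_congr rfl fun b _ => ?_
    simp only [eval_mul, eval_C, eval_pow, eval_X, MvPolynomial.eval_monomial,
      Finsupp.prod_fintype, pow_zero, implies_true, Fin.prod_univ_two, Matrix.cons_val_zero,
      Matrix.cons_val_one, Matrix.cons_val_fin_one]
    ring
  | add Q R hQ hR =>
    exact (hQ.add hR).congr fun a _ => by simp [add_mul, sum_add_distrib]

end IsExpPolyFrom

def increasingTuples (d L a : ℕ) : Finset (Fin d → ℕ) :=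
  (Fintype.piFinset fun _ => Ico L a).filter StrictMono

theorem mem_increasingTuples {d L a : ℕ} {I : Fin d → ℕ} :
    I ∈ increasingTuples d L a ↔ StrictMono I ∧ ∀ j, L ≤ I j ∧ I j < a := by
  simp [increasingTuples, and_comm]

theorem Fin.strictMono_snoc_iff {α : Type*} [Preorder α] {d : ℕ} {f : Fin d → α} {x : α} :
    StrictMono (Fin.snoc f x : Fin (d + 1) → α) ↔ StrictMono f ∧ ∀ i, f i < x := by
  rw [← Fin.insertNth_last', Fin.strictMono_insertNth_iff]
  simp [Fin.castSucc_lt_last]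

theorem snoc_mem_increasingTuples_succ {d L a b : ℕ} {J : Fin d → ℕ} :
    (Fin.snoc J b : Fin (d + 1) → ℕ) ∈ increasingTuples (d + 1) L a ↔
      J ∈ increasingTuples d L b ∧ b ∈ Ico L a := by
  simp only [mem_increasingTuples, Fin.strictMono_snoc_iff, Fin.forall_fin_succ',
    Fin.snoc_castSucc, Fin.snoc_last, mem_Ico]
  constructor
  · rintro ⟨⟨hJ, hJb⟩, hJL, hb⟩
    exact ⟨⟨hJ, fun j => ⟨(hJL j).1, hJb j⟩⟩, hb⟩
  · rintro ⟨⟨hJ, hJL⟩, hLb, hba⟩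
    exact ⟨⟨hJ, fun j => (hJL j).2⟩, fun j => ⟨(hJL j).1, (hJL j).2.trans hba⟩, hLb, hba⟩

theorem sum_increasingTuples_succ {R : Type*} [CommSemiring R] {d : ℕ}
    (g : Fin (d + 1) → ℕ → R) (L a : ℕ) :
    ∑ I ∈ increasingTuples (d + 1) L a, ∏ j, g j (I j) =
      ∑ b ∈ Ico L a,
        (∑ J ∈ increasingTuples d L b, ∏ j, g j.castSucc (J j)) * g (Fin.last d) b := by
  simp only [sum_mul]
  rw [sum_sigma']
  refine (sum_nbij' (fun x => Fin.snoc x.2 x.1) (fun I => ⟨I (Fin.last d), Fin.init I⟩)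
    ?_ ?_ ?_ ?_ ?_).symm
  · rintro ⟨b, J⟩ h
    rw [mem_sigma] at h
    exact snoc_mem_increasingTuples_succ.2 ⟨h.2, h.1⟩
  · intro I hI
    rw [← Fin.snoc_init_self I, snoc_mem_increasingTuples_succ] at hI
    exact mem_sigma.2 ⟨hI.2, hI.1⟩
  · rintro ⟨b, J⟩ -
    simp
  · intro I _
    exact Fin.snoc_init_self I
  · rintro ⟨b, J⟩ -
    simp [Fin.prod_univ_castSucc]

theorem isExpPolyFrom_sum_increasingTuples {K : Type*} [Field K] {l : K}
    (hl : ∀ c : ℕ, 1 ≤ c → l ^ c ≠ 1) (L : ℕ) {d : ℕ} (P : Fin d → K[X]) (C : Fin d → ℕ)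
    (hC : ∀ j, 1 ≤ C j) :
    IsExpPolyFrom l L fun a =>
      ∑ I ∈ increasingTuples d L a, ∏ j, (P j).eval (I j : K) * l ^ (C j * I j) := by
  induction d with
  | zero =>
    refine (isExpPolyFrom_const 1).congr fun a _ => ?_
    simp [increasingTuples, Subsingleton.strictMono]
  | succ d ih =>
    simp only [sum_increasingTuples_succ (fun j b => (P j).eval (b : K) * l ^ (C j * b)),
      ← mul_assoc]
    exact ((ih _ _ fun j => hC j.castSucc).mul
      (isExpPolyFrom_eval (P (Fin.last d)))).sum_Ico_mul_pow hl (hC (Fin.last d))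

theorem sum_filter_fin_eq_sum_increasingTuples {M : Type*} [AddCommMonoid M] {d : ℕ}
    (g : (Fin d → ℕ) → M) (L a : ℕ) :
    ∑ I ∈ univ.filter (fun I : Fin d → Fin a =>
        (∀ i j : Fin d, i < j → I i < I j) ∧ ∀ j : Fin d, L ≤ (I j : ℕ)), g (fun j => I j)
      = ∑ I ∈ increasingTuples d L a, g I := by
  refine sum_nbij (fun I j => I j) ?_ ?_ ?_ fun _ _ => rfl
  · intro I hI
    obtain ⟨-, hmono, hL⟩ := mem_filter.1 hI
    exact mem_increasingTuples.2 ⟨fun i j hij => hmono i j hij, fun j => ⟨hL j, (I j).isLt⟩⟩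
  · exact fun I _ J _ h => funext fun j => Fin.ext (congrFun h j)
  · intro J hJ
    obtain ⟨hmono, hJ⟩ := mem_increasingTuples.1 hJ
    exact ⟨fun j => ⟨J j, (hJ j).2⟩,
      mem_filter.2 ⟨mem_univ _, fun i j hij => hmono hij, fun j => (hJ j).1⟩, rfl⟩

theorem stmt_2_general {K : Type*} [Field K] (l : K)
    (hl : ∀ c : ℕ, 1 ≤ c → l ^ c ≠ 1)
    (δ : ℕ) (L : ℕ)
    (C : Fin δ → ℕ) (hC : ∀ j, 1 ≤ C j) (P : Fin δ → Polynomial K) :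
    ∃ Q : MvPolynomial (Fin 2) K, ∀ a : ℕ, L ≤ a →
      (∑ I ∈ Finset.univ.filter (fun I : Fin δ → Fin a =>
          (∀ i j : Fin δ, i < j → I i < I j) ∧ ∀ j : Fin δ, L ≤ (I j : ℕ)),
        ∏ j : Fin δ, Polynomial.eval ((I j : ℕ) : K) (P j) * l ^ (C j * (I j : ℕ)))
      = MvPolynomial.eval ![(a : K), l ^ a] Q := by
  obtain ⟨Q, hQ⟩ := isExpPolyFrom_sum_increasingTuples hl L P C hC
  refine ⟨Q, fun a ha => ?_⟩
  rw [sum_filter_fin_eq_sum_increasingTuples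
    (fun I => ∏ j, (P j).eval (I j : K) * l ^ (C j * I j))]
  exact hQ a ha

/-- Sums `∑_{L ≤ I_1 < ⋯ < I_δ ≤ a-1} ∏_j P_j(I_j) λ^{C_j I_j}` depend on `a` as a
polynomial function of `(a, λ^a)`, when `λ` is nonzero and not a root of unity. -/
theorem stmt_2 {K : Type*} [Field K] (l : K) (hl0 : l ≠ 0)
    (hl : ∀ c : ℕ, 1 ≤ c → l ^ c ≠ 1)
    (δ : ℕ) (hδ : 1 ≤ δ) (L : ℕ)
    (C : Fin δ → ℕ) (hC : ∀ j, 1 ≤ C j) (P : Fin δ → Polynomial K) :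
    ∃ Q : MvPolynomial (Fin 2) K, ∀ a : ℕ, L ≤ a →
      (∑ I ∈ Finset.univ.filter (fun I : Fin δ → Fin a =>
          (∀ i j : Fin δ, i < j → I i < I j) ∧ ∀ j : Fin δ, L ≤ (I j : ℕ)),
        ∏ j : Fin δ, Polynomial.eval ((I j : ℕ) : K) (P j) * l ^ (C j * (I j : ℕ)))
      = MvPolynomial.eval ![(a : K), l ^ a] Q :=
  stmt_2_general l hl δ L C hC P
end

section
/- Let d ≥ 1 be an integer, let F = ℚ(T_1, …, T_d) be the field of rational functions in d variables over ℚ (the fraction field of the polynomial ring ℚ[T_1, …, T_d]), and let A_1, …, A_d be polynomials with rational coefficients in one variable. Then there exists a polynomial Q in d+1 variables with coefficients in F such that for every natural number M one has, in F, ∑_{0 ≤ v_1 < v_2 < ⋯ < v_d ≤ M−1} ∏_{i=1}^{d} T_i^{v_i} · A_i(v_i) = Q(M, T_1^M, T_2^M, …, T_d^M), where the sum ranges over all strictly increasing d-tuples of integers v_1, …, v_d lying between 0 and M−1 (the sum being 0 when M = 0 or when there are no such tuples), A_i(v_i) ∈ ℚ ⊂ F is the evaluation of A_i at v_i, and Q(M,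 T_1^M, …, T_d^M) is the evaluation of Q at the image of M in F and at the M-th powers of the variables. -/
/-!
Call a function `f : ℕ → F` an exponential polynomial (with respect to `t₁, …, t_d`) if
`f M = Q(M, t₁^M, …, t_d^M)` for a fixed polynomial `Q`. These functions form a subalgebra, and
the key point is that it is closed under partial sums `M ↦ ∑_{v<M} f v`: it suffices to check
this on monomials `v ↦ a vᵏ xᵛ` with `x = ∏ tᵢ^{eᵢ}`, and for those one solves the difference
equation `x R(v+1) - R(v) = a vᵏ` with a polynomial `R` (possible in characteristic zero, also when
`x = 1`), so that the sum telescopes to `R(M) x^M - R(0)`. Peeling off the largest index `v_d`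
writes the sum over `v₁ < ⋯ < v_d < M` as a partial sum of the analogous sum with `d - 1` indices,
and induction on `d` concludes.
-/

open Polynomial Finset

section DifferenceEquation

variable {F : Type*} [Field F]

theorem Polynomial.degreeLT_le_range_of_forall_degree_eq {L : F[X] →ₗ[F] F[X]}
    (hL : ∀ n : ℕ, ∃ q, (L q).degree = n) (n : ℕ) : degreeLT F n ≤ LinearMap.range L := by
  induction n with
  | zero =>
    intro p hp
    rw [mem_degreeLT, Nat.cast_zero, Nat.WithBot.lt_zero_iff, degree_eq_bot] at hp
    simp [hp]
  | succ n ih =>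
    intro p hp
    obtain ⟨q, hq⟩ := hL n
    have hLq : (L q).coeff n ≠ 0 := by
      rw [← natDegree_eq_of_degree_eq_some hq]
      exact leadingCoeff_ne_zero.mpr fun h => by simp [h] at hq
    set c := p.coeff n / (L q).coeff n
    have hlower : p - L (c • q) ∈ degreeLT F n := by
      rw [mem_degreeLT, degree_lt_iff_coeff_zero]
      intro m hm
      rw [map_smul, coeff_sub, coeff_smul, smul_eq_mul]
      rcases hm.eq_or_lt with rfl | hm
      · simp only [c, div_mul_cancel₀ _ hLq, sub_self]
      · rw [mem_degreeLT] at hp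
        rw [coeff_eq_zero_of_degree_lt (hp.trans_le (by exact_mod_cast hm)),
          coeff_eq_zero_of_degree_lt (hq.trans_lt (by exact_mod_cast hm)), mul_zero, sub_zero]
    obtain ⟨r, hr⟩ := ih hlower
    exact ⟨r + c • q, by rw [map_add, hr, sub_add_cancel]⟩

theorem Polynomial.surjective_of_forall_degree_eq {L : F[X] →ₗ[F] F[X]}
    (hL : ∀ n : ℕ, ∃ q, (L q).degree = n) : Function.Surjective L := fun p =>
  degreeLT_le_range_of_forall_degree_eq hL (p.natDegree + 1)
    (mem_degreeLT.mpr (degree_le_natDegree.trans_lt (by exact_mod_cast p.natDegree.lt_succ_self)))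

noncomputable def twistedDiff (x : F) : F[X] →ₗ[F] F[X] := x • taylor 1 - LinearMap.id

theorem twistedDiff_apply (x : F) (R : F[X]) : twistedDiff x R = x • taylor 1 R - R := rfl

theorem degree_twistedDiff_X_pow {x : F} (hx : x ≠ 1) (n : ℕ) :
    (twistedDiff x (X ^ n)).degree = n := by
  refine degree_eq_of_le_of_coeff_ne_zero ?_ ?_
  · refine (degree_sub_le _ _).trans (max_le ((degree_smul_le _ _).trans ?_) ?_)
    · rw [degree_taylor, degree_X_pow]
    · rw [LinearMap.id_apply, degree_X_pow]
  · simpa [twistedDiff_apply, coeff_X_add_one_pow, sub_eq_zero] using hx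

theorem degree_twistedDiff_one_X_pow [CharZero F] (n : ℕ) :
    (twistedDiff (1 : F) (X ^ (n + 1))).degree = n := by
  have hlt : (twistedDiff (1 : F) (X ^ (n + 1))).degree < ↑(n + 1) := by
    rw [twistedDiff_apply, one_smul]
    have := degree_sub_lt_left (p := taylor 1 (X ^ (n + 1) : F[X])) (q := X ^ (n + 1))
      (by rw [degree_taylor]) ((taylor_eq_zero _ _).not.mpr (pow_ne_zero _ X_ne_zero))
      (by rw [leadingCoeff_taylor])
    rwa [degree_taylor, degree_X_pow] at this
  refine degree_eq_of_le_of_coeff_ne_zero (Order.le_of_lt_succ (by exact_mod_cast hlt)) ?_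
  rw [twistedDiff_apply, one_smul, taylor_X_pow, map_one, coeff_sub, coeff_X_add_one_pow,
    coeff_X_pow, if_neg n.succ_ne_self.symm, sub_zero, Nat.choose_succ_self_right]
  exact_mod_cast n.succ_ne_zero

theorem twistedDiff_surjective [CharZero F] (x : F) : Function.Surjective (twistedDiff x) := by
  refine surjective_of_forall_degree_eq fun n => ?_
  rcases eq_or_ne x 1 with rfl | hx
  · exact ⟨X ^ (n + 1), degree_twistedDiff_one_X_pow n⟩
  · exact ⟨X ^ n, degree_twistedDiff_X_pow hx n⟩

theorem exists_sum_range_eval_mul_pow [CharZero F] (x : F) (p : F[X]) :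
    ∃ R : F[X], ∀ M : ℕ,
      ∑ v ∈ range M, p.eval (v : F) * x ^ v = R.eval (M : F) * x ^ M - R.eval 0 := by
  obtain ⟨R, rfl⟩ := twistedDiff_surjective x p
  refine ⟨R, fun M => ?_⟩
  have telescope := sum_range_sub (fun v => R.eval (v : F) * x ^ v) M
  rw [Nat.cast_zero, pow_zero, mul_one] at telescope
  rw [← telescope]
  refine sum_congr rfl fun v _ => ?_
  simp only [twistedDiff_apply, eval_sub, eval_smul, taylor_eval, smul_eq_mul, Nat.cast_succ]
  ring

end DifferenceEquation

theorem sum_strictMono_fin_succ {α : Type*} [AddCommMonoid α] (k M : ℕ)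
    (φ : (Fin (k + 1) → ℕ) → α) :
    ∑ v ∈ univ.filter (fun v : Fin (k + 1) → Fin M => ∀ i j, i < j → v i < v j),
        φ (fun i => v i) =
      ∑ w ∈ range M, ∑ u ∈ univ.filter (fun u : Fin k → Fin w => ∀ i j, i < j → u i < u j),
        φ (Fin.snoc (α := fun _ => ℕ) (fun i => u i) w) := by
  rw [sum_sigma']
  refine sum_bij'
    (fun v hv => ⟨v (Fin.last k), fun i => ⟨v i.castSucc,
      (mem_filter.mp hv).2 _ _ (Fin.castSucc_lt_last i)⟩⟩)
    (fun x hx => Fin.snoc (α := fun _ => Fin M)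
      (fun i => ⟨x.2 i, (x.2 i).isLt.trans (mem_range.mp (mem_sigma.mp hx).1)⟩)
      ⟨x.1, mem_range.mp (mem_sigma.mp hx).1⟩) ?_ ?_ ?_ ?_ ?_
  · intro v hv
    simp only [mem_filter, mem_univ, true_and] at hv
    simp only [mem_sigma, mem_range, mem_filter, mem_univ, true_and, Fin.mk_lt_mk, Fin.isLt]
    exact fun i j hij => hv _ _ (Fin.castSucc_lt_castSucc_iff.mpr hij)
  · rintro ⟨w, u⟩ hx
    simp only [mem_sigma, mem_range, mem_filter, mem_univ, true_and] at hx
    simp only [mem_filter, mem_univ, true_and, Fin.forall_fin_succ', Fin.snoc_castSucc,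
      Fin.snoc_last, Fin.castSucc_lt_castSucc_iff, Fin.mk_lt_mk, Fin.castSucc_lt_last,
      (Fin.le_last _).not_gt, lt_self_iff_false, true_implies, false_implies, implies_true,
      and_true]
    exact fun i => ⟨hx.2 i, (u i).isLt⟩
  · intro v _
    funext i
    induction i using Fin.lastCases <;> simp
  · rintro ⟨w, u⟩ _
    refine Sigma.ext (by simp) (Function.hfunext rfl fun i j hij => ?_)
    obtain rfl := eq_of_heq hij
    exact (Fin.heq_ext_iff (by simp)).mpr (by simp)
  · intro v _
    congr 1
    funext i
    induction i using Fin.lastCases <;> simp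

section ExpPolynomials

variable {F : Type*} [Field F] {d : ℕ} (t : Fin d → F)

noncomputable def expPolyEval : MvPolynomial (Fin (d + 1)) F →ₐ[F] (ℕ → F) :=
  AlgHom.pi fun M => MvPolynomial.aeval (Fin.cons (M : F) fun i => t i ^ M)

theorem expPolyEval_apply (Q : MvPolynomial (Fin (d + 1)) F) (M : ℕ) :
    expPolyEval t Q M = MvPolynomial.eval (Fin.cons (M : F) fun i => t i ^ M) Q := rfl

noncomputable def expPolynomials : Subalgebra F (ℕ → F) := (expPolyEval t).range

theorem mem_expPolynomials_iff {f : ℕ → F} : f ∈ expPolynomials t ↔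
    ∃ Q : MvPolynomial (Fin (d + 1)) F, ∀ M : ℕ,
      f M = MvPolynomial.eval (Fin.cons (M : F) fun i => t i ^ M) Q := by
  simp only [expPolynomials, AlgHom.mem_range, funext_iff, expPolyEval_apply, eq_comm]

theorem natCast_mem_expPolynomials : (fun M : ℕ => (M : F)) ∈ expPolynomials t :=
  ⟨MvPolynomial.X 0, funext fun M => by simp [expPolyEval_apply]⟩

theorem pow_mem_expPolynomials (i : Fin d) : (fun M => t i ^ M) ∈ expPolynomials t :=
  ⟨MvPolynomial.X i.succ, funext fun M => by simp [expPolyEval_apply]⟩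

theorem eval_mem_expPolynomials (p : F[X]) :
    (fun M : ℕ => p.eval (M : F)) ∈ expPolynomials t := by
  have h : (fun M : ℕ => p.eval (M : F)) = aeval (fun M : ℕ => (M : F)) p := by
    ext M
    rw [← coe_aeval_eq_eval]
    exact aeval_algHom_apply (Pi.evalAlgHom F (fun _ : ℕ => F) M) _ p
  rw [h]
  exact Algebra.adjoin_le (Set.singleton_subset_iff.mpr (natCast_mem_expPolynomials t))
    (aeval_mem_adjoin_singleton F _)

theorem ratCast_eval_mem_expPolynomials [CharZero F] (A : ℚ[X]) :
    (fun M : ℕ => ((A.eval (M : ℚ) : ℚ) : F)) ∈ expPolynomials t := by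
  simpa [eval_natCast_map] using eval_mem_expPolynomials t (A.map (Rat.castHom F))

theorem prod_pow_pow_mem_expPolynomials (e : Fin d → ℕ) :
    (fun M => (∏ i, t i ^ e i) ^ M) ∈ expPolynomials t := by
  have h : (fun M => (∏ i, t i ^ e i) ^ M) = ∏ i, (fun M => t i ^ M) ^ e i := by
    ext M
    simp only [prod_apply, Pi.pow_apply, ← prod_pow, ← pow_mul, mul_comm]
  rw [h]
  exact prod_mem fun i _ => pow_mem (pow_mem_expPolynomials t i) _

theorem expPolyEval_monomial (u : Fin (d + 1) →₀ ℕ) (a : F) (M : ℕ) :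
    expPolyEval t (MvPolynomial.monomial u a) M =
      (monomial (u 0) a).eval (M : F) * (∏ i, t i ^ u i.succ) ^ M := by
  rw [expPolyEval_apply, MvPolynomial.eval_monomial, Finsupp.prod_fintype _ _ (by simp),
    Fin.prod_univ_succ, eval_monomial, ← prod_pow]
  simp only [Fin.cons_zero, Fin.cons_succ, ← pow_mul, mul_comm, mul_assoc]

theorem sum_range_mem_expPolynomials [CharZero F] {f : ℕ → F} (hf : f ∈ expPolynomials t) :
    (fun M => ∑ v ∈ range M, f v) ∈ expPolynomials t := by
  obtain ⟨Q, rfl⟩ := (AlgHom.mem_range _).mp hf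
  clear hf
  induction Q using MvPolynomial.induction_on' with
  | monomial u a =>
    obtain ⟨R, hR⟩ := exists_sum_range_eval_mul_pow (∏ i, t i ^ u i.succ) (monomial (u 0) a)
    simp_rw [expPolyEval_monomial, hR]
    exact sub_mem (mul_mem (eval_mem_expPolynomials t R) (prod_pow_pow_mem_expPolynomials t _))
      (algebraMap_mem _ (R.eval 0))
  | add p q hp hq =>
    simp only [map_add, Pi.add_apply, sum_add_distrib]
    exact add_mem hp hq

theorem sum_strictMono_prod_mem_expPolynomials [CharZero F] :
    ∀ (k : ℕ) (τ : Fin k → ℕ → F), (∀ i, τ i ∈ expPolynomials t) →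
      (fun M => ∑ v ∈ univ.filter (fun v : Fin k → Fin M => ∀ i j, i < j → v i < v j),
        ∏ i, τ i (v i)) ∈ expPolynomials t
  | 0, τ, _ => by
    convert one_mem (expPolynomials t) using 1
    ext M
    simp
  | k + 1, τ, hτ => by
    have hsum := sum_range_mem_expPolynomials t (mul_mem
      (sum_strictMono_prod_mem_expPolynomials k (fun i => τ i.castSucc) fun i => hτ _)
      (hτ (Fin.last k)))
    convert hsum using 2 with M
    rw [sum_strictMono_fin_succ k M fun v => ∏ i, τ i (v i)]
    simp only [Fin.prod_univ_castSucc, Fin.snoc_castSucc, Fin.snoc_last, Pi.mul_apply, sum_mul]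

end ExpPolynomials

theorem stmt_3_general (d : ℕ) (A : Fin d → Polynomial ℚ) :
    ∃ Q : MvPolynomial (Fin (d + 1)) (FractionRing (MvPolynomial (Fin d) ℚ)),
      ∀ M : ℕ,
        (∑ v ∈ Finset.univ.filter
            (fun v : Fin d → Fin M => ∀ i j : Fin d, i < j → v i < v j),
          ∏ i : Fin d,
            (algebraMap (MvPolynomial (Fin d) ℚ) (FractionRing (MvPolynomial (Fin d) ℚ))
                (MvPolynomial.X i)) ^ (v i : ℕ) *
              ((Polynomial.eval ((v i : ℕ) : ℚ) (A i) : ℚ) :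
                FractionRing (MvPolynomial (Fin d) ℚ)))
        = MvPolynomial.eval
            (Fin.cons ((M : ℕ) : FractionRing (MvPolynomial (Fin d) ℚ))
              (fun i : Fin d =>
                (algebraMap (MvPolynomial (Fin d) ℚ) (FractionRing (MvPolynomial (Fin d) ℚ))
                    (MvPolynomial.X i)) ^ M)) Q := by
  set t : Fin d → FractionRing (MvPolynomial (Fin d) ℚ) :=
    fun i => algebraMap (MvPolynomial (Fin d) ℚ) _ (MvPolynomial.X i)
  exact (mem_expPolynomials_iff t).mp <| sum_strictMono_prod_mem_expPolynomials t d _ fun i =>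
    mul_mem (pow_mem_expPolynomials t i) (ratCast_eval_mem_expPolynomials t (A i))

/-- Lemma 3.3 of the paper: in `F = ℚ(T_1,…,T_d)`, the sums
`∑_{0 ≤ v_1 < ⋯ < v_d ≤ M-1} ∏_i T_i^{v_i} A_i(v_i)` depend on `M` as the evaluation of a
fixed polynomial (with coefficients in `F`) at `(M, T_1^M, …, T_d^M)`. -/
theorem stmt_3 (d : ℕ) (hd : 1 ≤ d) (A : Fin d → Polynomial ℚ) :
    ∃ Q : MvPolynomial (Fin (d + 1)) (FractionRing (MvPolynomial (Fin d) ℚ)),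
      ∀ M : ℕ,
        (∑ v ∈ Finset.univ.filter
            (fun v : Fin d → Fin M => ∀ i j : Fin d, i < j → v i < v j),
          ∏ i : Fin d,
            (algebraMap (MvPolynomial (Fin d) ℚ) (FractionRing (MvPolynomial (Fin d) ℚ))
                (MvPolynomial.X i)) ^ (v i : ℕ) *
              ((Polynomial.eval ((v i : ℕ) : ℚ) (A i) : ℚ) :
                FractionRing (MvPolynomial (Fin d) ℚ)))
        = MvPolynomial.eval
            (Fin.cons ((M : ℕ) : FractionRing (MvPolynomial (Fin d) ℚ))
              (fun i : Fin d =>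
                (algebraMap (MvPolynomial (Fin d) ℚ) (FractionRing (MvPolynomial (Fin d) ℚ))
                    (MvPolynomial.X i)) ^ M)) Q :=
  stmt_3_general d A
end

section
/- Let q ≥ 2, d ≥ 1 and B ≥ 1 be integers. The map sending a d-tuple of triples ((v_i, u_i, r_i))_{1 ≤ i ≤ d} to the d-tuple (q^{v_i}(q u_i + r_i))_{1 ≤ i ≤ d} is a bijection from the set of d-tuples of triples with v_i, u_i natural numbers and 1 ≤ r_i ≤ q − 1 satisfying q^{v_d}(q u_d + r_d) < B and, for each 1 ≤ i ≤ d−1: u_i ≤ q^{v_{i+1}−v_i−1}(q u_{i+1} + r_{i+1}) − 1 if v_i < v_{i+1}; u_i ≤ u_{i+1} if v_i = v_{i+1} and r_i < r_{i+1}; u_i ≤ u_{i+1} − 1 if v_i = v_{i+1} and r_i ≥ r_{i+1}; q^{v_i−v_{i+1}−1}(q u_i + r_i) ≤ u_{i+1} if v_i > v_{i+1}; onto the set of strictly increasing d-tuples of integers (m_1, …, m_d) with 0 < m_1 < m_2 < ⋯ < m_d < B. -/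
/-!
Write `m > 0` as `q ^ v * n` with `q ∤ n` and divide `n = q * u + r`; then `0 < r < q`, and
since `(q * u + r) % q = r ≠ 0` the exponent `v`, and with it `(u, r)`, is determined by `m`.
To compare `q ^ v (q u + r)` with `q ^ v' (q u' + r')`, cancel `q ^ min v v'`. If `v ≠ v'`, one
side becomes `q * M` with `M = q ^ (|v - v'| - 1) (…)`, and as `0 < r < q` comparing `q * M` with
the other side is comparing `M` with its quotient by `q`; if `v = v'`, the comparison is
lexicographic in `(u, r)`. These are the four cases of `consecCond`, so the tuples of triples
satisfying it are exactly the preimages of the strictly increasing tuples.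
-/

/-- The value `q^v (q u + r)` associated to a triple `(v, u, r)`. -/
def tripleVal (q : ℕ) (x : ℕ × ℕ × ℕ) : ℕ := q ^ x.1 * (q * x.2.1 + x.2.2)

/-- The four-case condition on consecutive triples `x = (v, u, r)` and `y = (v', u', r')`
expressing `tripleVal q x < tripleVal q y`.  (Over the naturals, `u ≤ X - 1` is stated
as `u + 1 ≤ X`.) -/
def consecCond (q : ℕ) (x y : ℕ × ℕ × ℕ) : Prop :=
  (x.1 < y.1 → x.2.1 + 1 ≤ q ^ (y.1 - x.1 - 1) * (q * y.2.1 + y.2.2)) ∧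
  (x.1 = y.1 → x.2.2 < y.2.2 → x.2.1 ≤ y.2.1) ∧
  (x.1 = y.1 → y.2.2 ≤ x.2.2 → x.2.1 + 1 ≤ y.2.1) ∧
  (y.1 < x.1 → q ^ (x.1 - y.1 - 1) * (q * x.2.1 + x.2.2) ≤ y.2.1)

def admissibleTriples (q : ℕ) : Set (ℕ × ℕ × ℕ) := {x | 1 ≤ x.2.2 ∧ x.2.2 ≤ q - 1}

theorem mem_admissibleTriples {q : ℕ} {x : ℕ × ℕ × ℕ} :
    x ∈ admissibleTriples q ↔ 0 < x.2.2 ∧ x.2.2 < q := by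
  change 1 ≤ x.2.2 ∧ x.2.2 ≤ q - 1 ↔ _
  omega

section Division

variable {q u r M : ℕ}

theorem mul_add_lt_mul_iff_lt (hr : r < q) : q * u + r < q * M ↔ u < M := by
  refine ⟨fun h => ?_, fun h => by nlinarith⟩
  by_contra! h'
  nlinarith

theorem mul_lt_mul_add_iff_le (hr0 : 0 < r) (hr : r ≤ q) : q * M < q * u + r ↔ M ≤ u := by
  refine ⟨fun h => ?_, fun h => by nlinarith⟩
  by_contra! h'
  nlinarith

theorem mul_add_lt_mul_add_iff {u' r' : ℕ} (hr : r < q) (hr' : r' < q) :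
    q * u + r < q * u' + r' ↔ (r < r' → u ≤ u') ∧ (r' ≤ r → u + 1 ≤ u') := by
  rcases lt_or_ge r r' with h | h
  · have := mul_lt_mul_add_iff_le (q := q) (u := u') (M := u) (r := r' - r) (by omega) (by omega)
    simp only [h, h.not_ge, true_implies, false_implies, and_true]
    omega
  · have := mul_add_lt_mul_iff_lt (q := q) (u := u) (M := u') (r := r - r') (by omega)
    simp only [h, h.not_gt, true_implies, false_implies, true_and]
    omega

theorem mul_add_eq_mul_add_iff {u' r' : ℕ} (hr : r < q) (hr' : r' < q) :
    q * u + r = q * u' + r' ↔ u = u' ∧ r = r' := by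
  refine ⟨fun h => ⟨?_, ?_⟩, by rintro ⟨rfl, rfl⟩; rfl⟩
  · simpa [Nat.mul_add_div (Nat.zero_lt_of_lt hr), Nat.div_eq_of_lt hr, Nat.div_eq_of_lt hr'] using
      congrArg (· / q) h
  · simpa [Nat.mul_add_mod, Nat.mod_eq_of_lt hr, Nat.mod_eq_of_lt hr'] using congrArg (· % q) h

theorem not_dvd_mul_add (hr0 : 0 < r) (hr : r < q) : ¬ q ∣ q * u + r := by
  rw [Nat.dvd_add_right (dvd_mul_right q u)]
  exact Nat.not_dvd_of_pos_of_lt hr0 hr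

end Division

section TripleVal

variable {q : ℕ}

theorem tripleVal_add_succ (v k : ℕ) (y : ℕ × ℕ) :
    tripleVal q (v + k + 1, y) = q ^ v * (q * tripleVal q (k, y)) := by
  simp only [tripleVal]
  ring

theorem tripleVal_lt_tripleVal_iff {x y : ℕ × ℕ × ℕ} (hx : x ∈ admissibleTriples q)
    (hy : y ∈ admissibleTriples q) : tripleVal q x < tripleVal q y ↔ consecCond q x y := by
  obtain ⟨v, u, r⟩ := x
  obtain ⟨v', u', r'⟩ := y
  obtain ⟨hr0, hrq⟩ : 0 < r ∧ r < q := mem_admissibleTriples.1 hx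
  obtain ⟨hr0', hrq'⟩ : 0 < r' ∧ r' < q := mem_admissibleTriples.1 hy
  have hq : 0 < q := hr0.trans hrq
  rcases lt_trichotomy v v' with hv | rfl | hv
  · obtain ⟨k, rfl⟩ := Nat.exists_eq_add_of_lt hv
    have hk : v + k + 1 - v - 1 = k := by omega
    simp only [consecCond, hv, hv.ne, hv.not_gt, hk, true_implies, false_implies, and_true]
    rw [tripleVal_add_succ, tripleVal, Nat.mul_lt_mul_left (pow_pos hq v),
      mul_add_lt_mul_iff_lt hrq]
    rfl
  · simp only [consecCond, lt_irrefl, false_implies, true_implies, true_and, and_true]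
    rw [tripleVal, tripleVal, Nat.mul_lt_mul_left (pow_pos hq v), mul_add_lt_mul_add_iff hrq hrq']
  · obtain ⟨k, rfl⟩ := Nat.exists_eq_add_of_lt hv
    have hk : v' + k + 1 - v' - 1 = k := by omega
    simp only [consecCond, hv, hv.ne', hv.not_gt, hk, true_implies, false_implies, true_and]
    rw [tripleVal_add_succ, show tripleVal q (v', u', r') = q ^ v' * (q * u' + r') from rfl,
      Nat.mul_lt_mul_left (pow_pos hq v'), mul_lt_mul_add_iff_le hr0' hrq'.le]
    rfl

theorem tripleVal_injOn : Set.InjOn (tripleVal q) (admissibleTriples q) := by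
  rintro ⟨v, u, r⟩ hx ⟨v', u', r'⟩ hy h
  wlog hv : v ≤ v' generalizing v u r v' u' r'
  · exact (this v' u' r' hy v u r hx h.symm (by omega)).symm
  obtain ⟨hr0, hrq⟩ : 0 < r ∧ r < q := mem_admissibleTriples.1 hx
  obtain ⟨-, hrq'⟩ : 0 < r' ∧ r' < q := mem_admissibleTriples.1 hy
  have hq : 0 < q := hr0.trans hrq
  rcases hv.eq_or_lt with rfl | hv
  · obtain ⟨rfl, rfl⟩ :=
      (mul_add_eq_mul_add_iff hrq hrq').1 (Nat.eq_of_mul_eq_mul_left (pow_pos hq v) h)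
    rfl
  · obtain ⟨k, rfl⟩ := Nat.exists_eq_add_of_lt hv
    rw [tripleVal_add_succ] at h
    have h' := Nat.eq_of_mul_eq_mul_left (pow_pos hq v) h
    exact absurd (Dvd.intro _ h'.symm) (not_dvd_mul_add hr0 hrq)

theorem tripleVal_surjOn (hq : 2 ≤ q) :
    Set.SurjOn (tripleVal q) (admissibleTriples q) (Set.Ioi 0) := by
  intro m (hm : 0 < m)
  obtain ⟨v, n, hn, rfl⟩ := Nat.exists_eq_pow_mul_and_not_dvd hm.ne' q (by omega)
  have hr : n % q ≠ 0 := fun h => hn (Nat.dvd_of_mod_eq_zero h)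
  have hrq := Nat.mod_lt n (by omega : 0 < q)
  exact ⟨(v, n / q, n % q), mem_admissibleTriples.2 ⟨Nat.pos_of_ne_zero hr, hrq⟩,
    by simp only [tripleVal, Nat.div_add_mod]⟩

theorem tripleVal_bijOn (hq : 2 ≤ q) :
    Set.BijOn (tripleVal q) (admissibleTriples q) (Set.Ioi 0) := by
  refine ⟨?_, tripleVal_injOn, tripleVal_surjOn hq⟩
  rintro ⟨v, u, r⟩ hx
  obtain ⟨hr0, hrq⟩ : 0 < r ∧ r < q := mem_admissibleTriples.1 hx
  exact Nat.mul_pos (pow_pos (hr0.trans hrq) v) (by positivity)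

end TripleVal

theorem apply_zero_le_of_forall_lt_succ {α : Type*} [Preorder α] {d : ℕ} {m : Fin d → α}
    (hm : ∀ i : Fin d, ∀ h : (i : ℕ) + 1 < d, m i < m ⟨i + 1, h⟩) (i : Fin d) :
    m ⟨0, i.pos⟩ ≤ m i := by
  obtain ⟨k, hk⟩ := i
  induction k with
  | zero => exact le_rfl
  | succ k ih => exact (ih (by omega)).trans (hm ⟨k, by omega⟩ hk).le

/-- Lemma 3.1 of the paper (change of the domain of summation): the map
`((v_i, u_i, r_i))_i ↦ (q^{v_i} (q u_i + r_i))_i` is a bijection from the set of `d`-tuples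
of triples with `1 ≤ r_i ≤ q - 1`, last value `< B`, and consecutive pairs satisfying the
four-case condition, onto the set of tuples `0 < m_1 < ⋯ < m_d < B`. -/
theorem stmt_6 (q d B : ℕ) (hq : 2 ≤ q) (hd : 1 ≤ d) :
    Set.BijOn
      (fun (f : Fin d → ℕ × ℕ × ℕ) (i : Fin d) => tripleVal q (f i))
      {f : Fin d → ℕ × ℕ × ℕ |
        (∀ i : Fin d, 1 ≤ (f i).2.2 ∧ (f i).2.2 ≤ q - 1) ∧
        tripleVal q (f ⟨d - 1, by omega⟩) < B ∧
        (∀ i : Fin d, ∀ h : (i : ℕ) + 1 < d, consecCond q (f i) (f ⟨(i : ℕ) + 1, h⟩))}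
      {m : Fin d → ℕ |
        0 < m ⟨0, by omega⟩ ∧
        (∀ i : Fin d, ∀ h : (i : ℕ) + 1 < d, m i < m ⟨(i : ℕ) + 1, h⟩) ∧
        m ⟨d - 1, by omega⟩ < B} := by
  have hbij := tripleVal_bijOn hq
  refine ⟨?_, ?_, ?_⟩
  · rintro f ⟨hf, hlast, hcons⟩
    refine ⟨hbij.mapsTo (hf _), fun i h => ?_, hlast⟩
    exact (tripleVal_lt_tripleVal_iff (hf i) (hf _)).2 (hcons i h)
  · rintro f ⟨hf, -, -⟩ g ⟨hg, -, -⟩ hfg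
    funext i
    exact hbij.injOn (hf i) (hg i) (congrFun hfg i)
  · rintro m ⟨hm0, hinc, hlast⟩
    have hpos (i : Fin d) : m i ∈ Set.Ioi 0 :=
      hm0.trans_le (apply_zero_le_of_forall_lt_succ hinc i)
    choose f hf hfm using fun i => hbij.surjOn (hpos i)
    refine ⟨f, ⟨hf, ?_, fun i h => ?_⟩, funext hfm⟩
    · rwa [hfm]
    · rw [← tripleVal_lt_tripleVal_iff (hf i) (hf _), hfm, hfm]
      exact hinc i h
end
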